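/- For the partial abelian monoid ℕ (natural numbers with full addition, which is a total abelian monoid) and a pointed set X with trivial partial sum, every element of X ⊗ ℕ is represented by a multiset (x₁,1) ∔ … ∔ (x_k,1) with the x_i nonzero, and two such representatives give the same class iff they agree as multisets of elements of X∖{0}; hence X ⊗ ℕ is in bijection with the set of finite multisets of nonbasepoint elements of X (the underlying set of the infinite symmetric product SP^∞(X)). -/

import Mathlib

/-- Pairwise insummability for the trivial partial abelian monoid on a pointed
set: every two-element sub-multiset has both entries non-basepoint. -/
def PInsum {A : Type*} (z : A) (s : Multiset A) : Prop :=
  ∀ a b : A, a ::ₘ {b} ≤ s → ¬(a = z ∨ b = z)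

/-- Summability of a multiset in the trivial partial abelian monoid: at most
one entry is non-basepoint. -/
def TrivSumm {A : Type*} (z : A) (s : Multiset A) : Prop :=
  ∀ a b : A, a ::ₘ {b} ≤ s → (a = z ∨ b = z)

/-- Pairwise insummability in `ℕ` with total addition: no pair is insummable,
so a multiset is pairwise insummable only if it has no two-element sub-multiset. -/
def PInsumNat (s : Multiset ℕ) : Prop :=
  ∀ a b : ℕ, a ::ₘ {b} ≤ s → False

/-- The admissible multisets `T(X,ℕ)`: for every sub-multiset, if one projection
is pairwise insummable then the other is summable (summability in `ℕ` is
automatic). -/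
def Adm {X : Type*} (x0 : X) (σ : Multiset (X × ℕ)) : Prop :=
  ∀ τ, τ ≤ σ →
    (PInsum x0 (τ.map Prod.fst) → True) ∧
    (PInsumNat (τ.map Prod.snd) → TrivSumm x0 (τ.map Prod.fst))

/-- The generating relations for `X ⊗ ℕ`: deleting pairs with a zero
coordinate, splitting the (trivial) sum in the `X`-coordinate, and splitting
the sum in the `ℕ`-coordinate. -/
inductive TRel {X : Type*} (x0 : X) :
    Multiset (X × ℕ) → Multiset (X × ℕ) → Prop
  | del (x n σ) : (x = x0 ∨ n = 0) → TRel x0 ((x, n) ::ₘ σ) σ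
  | splitX (x n σ) : TRel x0 ((x, n) ::ₘ σ) ((x, n) ::ₘ (x0, n) ::ₘ σ)
  | splitN (x m n σ) : TRel x0 ((x, m + n) ::ₘ σ) ((x, m) ::ₘ (x, n) ::ₘ σ)

/-- The least equivalence relation generated by the relations. -/
def Eqv {X : Type*} (x0 : X) : Multiset (X × ℕ) → Multiset (X × ℕ) → Prop :=
  Relation.EqvGen (TRel x0)

/-- The product `X ⊗ ℕ`: admissible multisets modulo the equivalence. -/
def Tensor {X : Type*} (x0 : X) : Type _ :=
  Quot (fun a b : {σ : Multiset (X × ℕ) // Adm x0 σ} => Eqv x0 a.1 b.1)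

/-!
Since addition on `ℕ` is total, the admissibility condition only concerns sub-multisets with at
most one element, so every multiset is admissible. A complete invariant of the equivalence is the
expansion of `σ`, in which each pair `(x, n)` with `x ≠ x0` contributes `n` copies of `x`: each
generating relation preserves it, and splitting `(x, n)` into `n` copies of `(x, 1)` and deleting
the pairs on the basepoint relates `σ` to the multiset of `(x, 1)` with `x` running over its
expansion.
-/

theorem Relation.EqvGen.map {α β : Type*} {r : α → α → Prop} {s : β → β → Prop}
    (f : α → β) (hf : ∀ a b, r a b → s (f a) (f b)) {a b : α} (h : EqvGen r a b) :
    EqvGen s (f a) (f b) := by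
  induction h with
  | rel a b h => exact .rel _ _ (hf a b h)
  | refl => exact .refl _
  | symm _ _ _ ih => exact .symm _ _ ih
  | trans _ _ _ _ _ hab hbc => exact .trans _ _ _ hab hbc

open Multiset

lemma card_le_one_of_pInsumNat {s : Multiset ℕ} (h : PInsumNat s) : card s ≤ 1 := by
  by_contra! hs
  obtain ⟨a, ha⟩ := card_pos_iff_exists_mem.1 (by omega : 0 < card s)
  obtain ⟨t, rfl⟩ := exists_cons_of_mem ha
  obtain ⟨b, hb⟩ := card_pos_iff_exists_mem.1 (by rw [card_cons] at hs; omega : 0 < card t)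
  exact h a b (cons_le_cons a (singleton_le.2 hb))

lemma trivSumm_of_card_le_one {A : Type*} (z : A) {s : Multiset A} (h : card s ≤ 1) :
    TrivSumm z s := by
  intro a b hab
  have := card_le_card hab
  rw [card_cons, card_singleton] at this
  omega

lemma adm_all {X : Type*} (x0 : X) (σ : Multiset (X × ℕ)) : Adm x0 σ := fun _ _ =>
  ⟨fun _ => trivial, fun h =>
    trivSumm_of_card_le_one x0 (by simpa only [card_map] using card_le_one_of_pInsumNat h)⟩

section Expansion

variable {X : Type*} (x0 : X)

open scoped Classical

lemma TRel.add_right {σ τ : Multiset (X × ℕ)} (h : TRel x0 σ τ) (ρ : Multiset (X × ℕ)) :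
    TRel x0 (σ + ρ) (τ + ρ) := by
  cases h with
  | del x n _ h => simpa [cons_add] using TRel.del x n (τ + ρ) h
  | splitX x n σ => simpa [cons_add] using TRel.splitX (x0 := x0) x n (σ + ρ)
  | splitN x m n σ => simpa [cons_add] using TRel.splitN (x0 := x0) x m n (σ + ρ)

lemma eqv_add_left {σ τ : Multiset (X × ℕ)} (h : Eqv x0 σ τ) (ρ : Multiset (X × ℕ)) :
    Eqv x0 (ρ + σ) (ρ + τ) := by
  simp only [add_comm ρ]
  exact h.map (· + ρ) fun _ _ h => h.add_right x0 ρ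

lemma eqv_cons_replicate (x : X) (n : ℕ) (σ : Multiset (X × ℕ)) :
    Eqv x0 ((x, n) ::ₘ σ) (replicate n (x, 1) + σ) := by
  induction n generalizing σ with
  | zero =>
    rw [replicate_zero, zero_add]
    exact .rel _ _ (TRel.del x 0 σ (Or.inr rfl))
  | succ n ih =>
    have split : TRel x0 ((x, n + 1) ::ₘ σ) ((x, n) ::ₘ (x, 1) ::ₘ σ) :=
      TRel.splitN x n 1 σ
    have expand := ih ((x, 1) ::ₘ σ)
    rw [add_cons, ← cons_add, ← replicate_succ] at expand
    exact .trans _ _ _ (.rel _ _ split) expand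

noncomputable def expansion (σ : Multiset (X × ℕ)) : Multiset X :=
  σ.bind fun p => if p.1 = x0 then 0 else replicate p.2 p.1

lemma expansion_cons (p : X × ℕ) (σ : Multiset (X × ℕ)) :
    expansion x0 (p ::ₘ σ) = (if p.1 = x0 then 0 else replicate p.2 p.1) + expansion x0 σ :=
  cons_bind _ _ _

lemma ne_of_mem_expansion {σ : Multiset (X × ℕ)} {x : X} (hx : x ∈ expansion x0 σ) :
    x ≠ x0 := by
  obtain ⟨p, -, hx⟩ := mem_bind.1 hx
  split_ifs at hx with hp
  · simp at hx
  · rw [eq_of_mem_replicate hx]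
    exact hp

lemma expansion_map_one {l : Multiset X} (hl : ∀ x ∈ l, x ≠ x0) :
    expansion x0 (l.map fun x => (x, 1)) = l := by
  induction l using Multiset.induction with
  | empty => rfl
  | cons a l ih =>
    rw [map_cons, expansion_cons, if_neg (hl a (mem_cons_self a l)),
      ih fun x hx => hl x (mem_cons_of_mem hx), replicate_one, singleton_add]

lemma expansion_eq_of_tRel {σ τ : Multiset (X × ℕ)} (h : TRel x0 σ τ) :
    expansion x0 σ = expansion x0 τ := by
  cases h with
  | del x n σ h =>
    rw [expansion_cons]
    rcases h with h | h <;> simp [h]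
  | splitX x n σ => simp [expansion_cons]
  | splitN x m n σ =>
    by_cases hx : x = x0 <;> simp [expansion_cons, hx, replicate_add, add_assoc]

lemma expansion_eq_of_eqv {σ τ : Multiset (X × ℕ)} (h : Eqv x0 σ τ) :
    expansion x0 σ = expansion x0 τ :=
  congrArg (Quot.lift (expansion x0) fun _ _ => expansion_eq_of_tRel x0) (Quot.eqvGen_sound h)

lemma eqv_map_expansion (σ : Multiset (X × ℕ)) :
    Eqv x0 σ ((expansion x0 σ).map fun x => (x, 1)) := by
  induction σ using Multiset.induction with
  | empty => exact .refl _
  | cons p σ ih =>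
    obtain ⟨x, n⟩ := p
    by_cases hx : x = x0
    · rw [expansion_cons, if_pos hx, zero_add]
      exact .trans _ _ _ (.rel _ _ (TRel.del x n σ (Or.inl hx))) ih
    · rw [expansion_cons, if_neg hx, map_add, map_replicate]
      exact .trans _ _ _ (eqv_cons_replicate x0 x n σ) (eqv_add_left x0 ih _)

noncomputable def tensorEquiv : Tensor x0 ≃ {s : Multiset X // ∀ x ∈ s, x ≠ x0} where
  toFun := Quot.lift (fun σ => ⟨expansion x0 σ.1, fun _ => ne_of_mem_expansion x0⟩)
    fun _ _ h => Subtype.ext (expansion_eq_of_eqv x0 h)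
  invFun s := Quot.mk _ ⟨s.1.map fun x => (x, 1), adm_all x0 _⟩
  left_inv := Quot.ind fun σ => Quot.sound (.symm _ _ (eqv_map_expansion x0 σ.1))
  right_inv s := Subtype.ext (expansion_map_one x0 s.2)

end Expansion

/-- Every element of `X ⊗ ℕ` is represented by a multiset
`(x₁,1) ∔ ⋯ ∔ (x_k,1)` with the `xᵢ` non-basepoint; two such representatives
give the same class iff they agree as multisets of non-basepoint elements of
`X`; hence `X ⊗ ℕ` is in bijection with the set of finite multisets of
non-basepoint elements of `X` (the underlying set of `SP^∞(X)`). -/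
theorem tensor_nat_eq_sp {X : Type*} (x0 : X) :
    (∀ σ : Multiset (X × ℕ), Adm x0 σ →
      ∃ l : Multiset X, (∀ x ∈ l, x ≠ x0) ∧
        Eqv x0 σ (l.map fun x => (x, 1))) ∧
    (∀ l l' : Multiset X, (∀ x ∈ l, x ≠ x0) → (∀ x ∈ l', x ≠ x0) →
      (Eqv x0 (l.map fun x => (x, 1)) (l'.map fun x => (x, 1)) ↔ l = l')) ∧
    ∃ e : Tensor x0 ≃ {s : Multiset X // ∀ x ∈ s, x ≠ x0},
      ∀ (l : Multiset X) (hl : ∀ x ∈ l, x ≠ x0)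
        (h : Adm x0 (l.map fun x => (x, 1))),
        e (Quot.mk _ ⟨l.map fun x => (x, 1), h⟩) = ⟨l, hl⟩ := by
  refine ⟨fun σ _ =>
      ⟨expansion x0 σ, fun _ => ne_of_mem_expansion x0, eqv_map_expansion x0 σ⟩,
    fun l l' hl hl' => ⟨fun h => ?_, fun h => h ▸ .refl _⟩,
    tensorEquiv x0, fun l hl _ => Subtype.ext (expansion_map_one x0 hl)⟩
  rw [← expansion_map_one x0 hl, ← expansion_map_one x0 hl']
  exact expansion_eq_of_eqv x0 h
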